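/- (Theorem 3, uniform exponential stability, in integral-equation form.) Assume w₀(0) = 0, w_j(0,0) = 0, u₀(0) = 0, the Lipschitz conditions |w₀(v) − w₀(v')| ≤ l₀√(2m)·‖v − v'‖, |w_j(a,b) − w_j(a',b')| ≤ l_j·(|a − a'| + |b − b'|), |u₀(z) − u₀(z')| ≤ l_J·|z − z'|, and that both Λ_σ := √( c₀(σ)² + Σ_{j=1}^m c_j(σ)² ) < 1 and Λ₀ := √( c₀(0)² + Σ_{j=1}^m c_j(0)² ) < 1, where c₀(τ) = l₀√(2m)/(k₀−τ) + l_J·e^{(k₀−τ)ω}/(1 − e^{−(k₀−τ)ω}) and c_j(τ) = 2l_j/(k_j−τ). Then for every ε > 0 there exists δ > 0 such that: every bounded measurable v : [0,∞) → ℝ^{m+1} satisfying v = Πv pointwise on [0,∞) (with initial vector v⁰ = v(0)) and ‖v(0)‖ < δ satisfies ‖v(t)‖ ≤ ε·e^{−σt} for all t ≥ 0. -/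

import Mathlib

/-- The Euclidean norm on `Fin n → ℝ`. -/
noncomputable def eNorm {n : ℕ} (v : Fin n → ℝ) : ℝ := Real.sqrt (∑ j, v j ^ 2)

/-- The operator `Π` from the proof of Theorem 3: coordinate `0` gets
`(Πψ)₀(t) = e^{−k₀t}v⁰₀ + ∫₀^t e^{−k₀(t−s)} w₀(ψ(s)) ds
  + Σ_{0 ≤ θ_i < t} e^{−k₀(t−θ_i)} u₀(ψ₀(θ_i))`,
and the coordinates `j = 1,…,m` get
`(Πψ)_j(t) = e^{−k_jt}v⁰_j + ∫₀^t e^{−k_j(t−s)} w_j(ψ₀(s), ψ_j(s)) ds`. -/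
noncomputable def PiOp (m : ℕ) (θ : ℤ → ℝ) (k : Fin (m + 1) → ℝ)
    (w₀ : (Fin (m + 1) → ℝ) → ℝ) (w : Fin (m + 1) → ℝ → ℝ → ℝ) (u₀ : ℝ → ℝ)
    (v0 : Fin (m + 1) → ℝ) (ψ : ℝ → Fin (m + 1) → ℝ) : ℝ → Fin (m + 1) → ℝ := fun t j =>
  if j = 0 then
    Real.exp (-(k 0) * t) * v0 0
      + (∫ s in (0:ℝ)..t, Real.exp (-(k 0) * (t - s)) * w₀ (ψ s))
      + ∑' i : ℤ, (if 0 ≤ θ i ∧ θ i < t then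
          Real.exp (-(k 0) * (t - θ i)) * u₀ (ψ (θ i) 0) else 0)
  else
    Real.exp (-(k j) * t) * v0 j
      + ∫ s in (0:ℝ)..t, Real.exp (-(k j) * (t - s)) * w j (ψ s 0) (ψ s j)

/-!
Fix `t ≥ 0` and let `S` be the supremum of `e^{σs}‖v(s)‖` over `[0, t]`. On `[0, t]` every
nonlinearity is then bounded by a constant times `S e^{-σs}`. Convolving such a bound with the
kernel `e^{-k_j(τ-s)}` gives `S e^{-στ}/(k_j - σ)`, and since the impulse times satisfy
`iω ≤ θ_i < (i+1)ω`, the impulse sum is dominated by the geometric series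
`Σ_n e^{(k₀-σ)ω} e^{-n(k₀-σ)ω}`. Coordinatewise this gives
`|v_j(τ)| ≤ e^{-στ}(|v_j(0)| + c_j(σ) S)`, hence `S ≤ ‖v(0)‖ + Λ_σ S`, i.e.
`S ≤ ‖v(0)‖ / (1 - Λ_σ)`, and `δ = ε (1 - Λ_σ)` works.
-/

open Real MeasureTheory

lemma le_div_one_sub_of_self_improving_bound {α : Type*} {g : α → ℝ} {s : Set α} {a Λ : ℝ}
    (hΛ : Λ < 1) (hs : s.Nonempty) (hg : BddAbove (g '' s))
    (h : ∀ S, (∀ x ∈ s, g x ≤ S) → ∀ x ∈ s, g x ≤ a + Λ * S) {x : α} (hx : x ∈ s) :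
    g x ≤ a / (1 - Λ) := by
  have hsup : ∀ y ∈ s, g y ≤ sSup (g '' s) := fun y hy => le_csSup hg (Set.mem_image_of_mem g hy)
  have hself : sSup (g '' s) ≤ a + Λ * sSup (g '' s) :=
    csSup_le (hs.image g) (Set.forall_mem_image.2 (h _ hsup))
  rw [le_div_iff₀ (sub_pos.2 hΛ)]
  nlinarith [hsup x hx]

section EuclideanNorm

variable {n : ℕ}

lemma eNorm_eq_norm_toLp (v : Fin n → ℝ) :
    eNorm v = ‖(WithLp.toLp 2 v : EuclideanSpace ℝ (Fin n))‖ := by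
  simp [eNorm, EuclideanSpace.norm_eq, sq_abs]

lemma abs_le_eNorm (v : Fin n → ℝ) (j : Fin n) : |v j| ≤ eNorm v := by
  simpa [eNorm_eq_norm_toLp] using
    PiLp.norm_apply_le (WithLp.toLp 2 v : EuclideanSpace ℝ (Fin n)) j

lemma eNorm_le_eNorm {a b : Fin n → ℝ} (h : ∀ j, |a j| ≤ |b j|) : eNorm a ≤ eNorm b :=
  sqrt_le_sqrt (Finset.sum_le_sum fun j _ => sq_le_sq.2 (h j))

lemma eNorm_le_of_abs_le {a b c : Fin n → ℝ} {r s : ℝ} (hr : 0 ≤ r) (hs : 0 ≤ s)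
    (h : ∀ j, |a j| ≤ (|b j| + s * c j) * r) : eNorm a ≤ (eNorm b + s * eNorm c) * r := by
  let B : EuclideanSpace ℝ (Fin n) := WithLp.toLp 2 fun j => |b j|
  let C : EuclideanSpace ℝ (Fin n) := WithLp.toLp 2 fun j => |c j|
  have hle : eNorm a ≤ ‖r • (B + s • C)‖ := by
    have hBC : r • (B + s • C) = WithLp.toLp 2 fun j => r * (|b j| + s * |c j|) := by
      ext j; simp [B, C]; ring
    rw [hBC, ← eNorm_eq_norm_toLp]
    refine eNorm_le_eNorm fun j => (h j).trans ?_
    calc (|b j| + s * c j) * r ≤ (|b j| + s * |c j|) * r := by gcongr; exact le_abs_self _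
      _ ≤ |r * (|b j| + s * |c j|)| := by rw [mul_comm]; exact le_abs_self _
  calc eNorm a ≤ ‖r • (B + s • C)‖ := hle
    _ ≤ (‖B‖ + s * ‖C‖) * r := by
      rw [norm_smul, Real.norm_of_nonneg hr, mul_comm]
      gcongr
      exact (norm_add_le _ _).trans (by rw [norm_smul, Real.norm_of_nonneg hs])
    _ = (eNorm b + s * eNorm c) * r := by
      simp [B, C, eNorm_eq_norm_toLp, EuclideanSpace.norm_eq]

end EuclideanNorm

section ExponentialKernel

variable {k σ τ : ℝ}

lemma le_mul_exp_neg_mul_iff {x y a b : ℝ} : x ≤ y * exp (-a * b) ↔ exp (a * b) * x ≤ y := by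
  rw [neg_mul, exp_neg, ← div_eq_mul_inv, le_div_iff₀' (exp_pos _)]

lemma abs_exp_neg_mul_mul_le (hσk : σ ≤ k) (hτ : 0 ≤ τ) (x : ℝ) :
    |exp (-k * τ) * x| ≤ |x| * exp (-σ * τ) := by
  rw [abs_mul, abs_exp, mul_comm]
  gcongr

lemma integral_exp_kernel_le (hσk : σ < k) :
    ∫ s in (0 : ℝ)..τ, exp (-k * (τ - s)) * exp (-σ * s) ≤ exp (-σ * τ) / (k - σ) := by
  have hκ : 0 < k - σ := sub_pos.2 hσk
  have hrw : ∀ s, exp (-k * (τ - s)) * exp (-σ * s) = exp (-k * τ) * exp ((k - σ) * s) := by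
    intro s; rw [← exp_add, ← exp_add]; ring_nf
  simp_rw [hrw]
  rw [intervalIntegral.integral_const_mul,
    intervalIntegral.integral_comp_mul_left (fun s => exp s) hκ.ne', integral_exp]
  have hexp : -k * τ + (k - σ) * τ = -σ * τ := by ring
  rw [smul_eq_mul, mul_zero, exp_zero, mul_left_comm, mul_sub, ← exp_add, hexp, mul_one,
    ← div_eq_inv_mul]
  gcongr
  exact sub_le_self _ (exp_pos _).le

lemma abs_integral_exp_kernel_le {g : ℝ → ℝ} {C : ℝ} (hσk : σ < k) (hτ : 0 ≤ τ) (hC : 0 ≤ C)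
    (hg : ∀ s ∈ Set.Icc 0 τ, |g s| ≤ C * exp (-σ * s)) :
    |∫ s in (0 : ℝ)..τ, exp (-k * (τ - s)) * g s| ≤ C / (k - σ) * exp (-σ * τ) := by
  calc |∫ s in (0 : ℝ)..τ, exp (-k * (τ - s)) * g s|
      ≤ ∫ s in (0 : ℝ)..τ, C * (exp (-k * (τ - s)) * exp (-σ * s)) := by
        -- only the majorant has to be integrable: a non-integrable integrand has integral `0`
        rw [← Real.norm_eq_abs]
        refine intervalIntegral.norm_integral_le_of_norm_le hτ (ae_of_all _ fun s hs => ?_) ?_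
        · rw [Real.norm_eq_abs, abs_mul, abs_exp, mul_left_comm]
          gcongr
          exact hg s (Set.Ioc_subset_Icc_self hs)
        · exact Continuous.intervalIntegrable (by fun_prop) _ _
    _ ≤ C * (exp (-σ * τ) / (k - σ)) := by
        rw [intervalIntegral.integral_const_mul]
        gcongr
        exact integral_exp_kernel_le hσk
    _ = C / (k - σ) * exp (-σ * τ) := by ring

end ExponentialKernel

section Impulses

variable {ω τ : ℝ} {θ : ℤ → ℝ}

lemma exists_nat_eq_lt_ceil_of_impulse (hω : 0 < ω)
    (hθ : ∀ i : ℤ, (i : ℝ) * ω ≤ θ i ∧ θ i < ((i : ℝ) + 1) * ω) {i : ℤ}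
    (h0 : 0 ≤ θ i) (hτ : θ i < τ) : ∃ n : ℕ, (n : ℤ) = i ∧ n < ⌈τ / ω⌉₊ := by
  obtain ⟨hlo, hhi⟩ := hθ i
  have hi : (-1 : ℤ) < i := by
    have : (-1 : ℝ) < i := by nlinarith
    exact_mod_cast this
  obtain ⟨n, rfl⟩ := Int.eq_ofNat_of_zero_le (by omega : 0 ≤ i)
  refine ⟨n, rfl, Nat.lt_ceil.2 ?_⟩
  rw [lt_div_iff₀ hω]
  push_cast at hlo
  linarith

lemma tsum_impulses_eq_sum_range (hω : 0 < ω)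
    (hθ : ∀ i : ℤ, (i : ℝ) * ω ≤ θ i ∧ θ i < ((i : ℝ) + 1) * ω) (F : ℤ → ℝ) :
    ∑' i, (if 0 ≤ θ i ∧ θ i < τ then F i else 0) =
      ∑ n ∈ Finset.range ⌈τ / ω⌉₊, (if 0 ≤ θ n ∧ θ n < τ then F n else 0) := by
  rw [tsum_eq_sum (s := (Finset.range ⌈τ / ω⌉₊).map Nat.castEmbedding), Finset.sum_map]
  · rfl
  intro i hi
  refine if_neg fun ⟨h0, hτ⟩ => hi ?_
  obtain ⟨n, rfl, hn⟩ := exists_nat_eq_lt_ceil_of_impulse hω hθ h0 hτ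
  exact Finset.mem_map_of_mem _ (Finset.mem_range.2 hn)

lemma sum_range_impulse_kernel_le (hω : 0 < ω)
    (hθ : ∀ i : ℤ, (i : ℝ) * ω ≤ θ i ∧ θ i < ((i : ℝ) + 1) * ω) {κ : ℝ} (hκ : 0 < κ) :
    ∑ n ∈ Finset.range ⌈τ / ω⌉₊, (if 0 ≤ θ n ∧ θ n < τ then exp (-κ * (τ - θ n)) else 0) ≤
      exp (κ * ω) / (1 - exp (-(κ * ω))) := by
  set N := ⌈τ / ω⌉₊
  set r := exp (-(κ * ω))
  have hr1 : r < 1 := exp_lt_one_iff.2 (by nlinarith)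
  have hterm : ∀ n ∈ Finset.range N,
      (if 0 ≤ θ n ∧ θ n < τ then exp (-κ * (τ - θ n)) else 0) ≤ exp (κ * ω) * r ^ (N - 1 - n) := by
    intro n hn
    have hnN : n + 1 ≤ N := Finset.mem_range.1 hn
    split_ifs with h
    · have hNτ : ((N : ℝ) - 1) * ω < τ := by
        have hpos : 0 < τ / ω := Nat.ceil_pos.1 (by omega)
        have := Nat.ceil_lt_add_one hpos.le
        rw [← lt_div_iff₀ hω]
        linarith
      -- `θ n < (n + 1) ω` and `(N - 1) ω < τ` give `τ - θ n > (N - 1 - n) ω - ω`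
      have hθn := (hθ n).2
      rw [← exp_nat_mul, ← exp_add]
      gcongr
      push_cast [Nat.cast_sub (by omega : 1 ≤ N), Nat.cast_sub (by omega : n ≤ N - 1)]
      push_cast at hθn
      nlinarith
    · positivity
  calc _ ≤ ∑ n ∈ Finset.range N, exp (κ * ω) * r ^ (N - 1 - n) := Finset.sum_le_sum hterm
    _ = exp (κ * ω) * ∑ n ∈ Finset.range N, r ^ n := by
      rw [← Finset.mul_sum, Finset.sum_range_reflect (fun n => r ^ n)]
    _ ≤ exp (κ * ω) * (r ^ 0 / (1 - r)) := by
      gcongr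
      rw [Finset.range_eq_Ico]
      exact geom_sum_Ico_le_of_lt_one (exp_pos _).le hr1
    _ = exp (κ * ω) / (1 - r) := by ring

lemma abs_tsum_impulses_le (hω : 0 < ω)
    (hθ : ∀ i : ℤ, (i : ℝ) * ω ≤ θ i ∧ θ i < ((i : ℝ) + 1) * ω) {k σ C : ℝ} (hσk : σ < k)
    (hC : 0 ≤ C) {a : ℤ → ℝ} (ha : ∀ i, 0 ≤ θ i → θ i < τ → |a i| ≤ C * exp (-σ * θ i)) :
    |∑' i, (if 0 ≤ θ i ∧ θ i < τ then exp (-k * (τ - θ i)) * a i else 0)| ≤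
      C * (exp ((k - σ) * ω) / (1 - exp (-((k - σ) * ω)))) * exp (-σ * τ) := by
  rw [tsum_impulses_eq_sum_range hω hθ]
  calc _ ≤ ∑ n ∈ Finset.range ⌈τ / ω⌉₊,
        |if 0 ≤ θ n ∧ θ n < τ then exp (-k * (τ - θ n)) * a n else 0| :=
        Finset.abs_sum_le_sum_abs _ _
    _ ≤ ∑ n ∈ Finset.range ⌈τ / ω⌉₊, C * exp (-σ * τ) *
        (if 0 ≤ θ n ∧ θ n < τ then exp (-(k - σ) * (τ - θ n)) else 0) := by
      refine Finset.sum_le_sum fun n _ => ?_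
      split_ifs with h
      · have hsplit : exp (-k * (τ - θ n)) * exp (-σ * θ n) =
            exp (-σ * τ) * exp (-(k - σ) * (τ - θ n)) := by
          rw [← exp_add, ← exp_add]; ring_nf
        calc |exp (-k * (τ - θ n)) * a n| ≤ exp (-k * (τ - θ n)) * (C * exp (-σ * θ n)) := by
              rw [abs_mul, abs_exp]
              gcongr
              exact ha n h.1 h.2
          _ = C * exp (-σ * τ) * exp (-(k - σ) * (τ - θ n)) := by
              rw [mul_left_comm, hsplit, mul_assoc]
      · simp
    _ = C * exp (-σ * τ) * ∑ n ∈ Finset.range ⌈τ / ω⌉₊,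
        (if 0 ≤ θ n ∧ θ n < τ then exp (-(k - σ) * (τ - θ n)) else 0) := by
      rw [Finset.mul_sum]
    _ ≤ C * exp (-σ * τ) * (exp ((k - σ) * ω) / (1 - exp (-((k - σ) * ω)))) := by
      gcongr
      exact sum_range_impulse_kernel_le hω hθ (sub_pos.2 hσk)
    _ = _ := by ring

end Impulses

noncomputable def stabilityCoeff (m : ℕ) (ω σ : ℝ) (k l : Fin (m + 1) → ℝ) (lJ : ℝ)
    (j : Fin (m + 1)) : ℝ :=
  if j = 0 then
    l 0 * Real.sqrt (2 * m) / (k 0 - σ) + lJ * exp ((k 0 - σ) * ω) / (1 - exp (-((k 0 - σ) * ω)))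
  else 2 * l j / (k j - σ)

section FixedPointOperator

variable {m : ℕ} {ω σ τ S lJ : ℝ} {θ : ℤ → ℝ} {k l : Fin (m + 1) → ℝ}
  {w₀ : (Fin (m + 1) → ℝ) → ℝ} {w : Fin (m + 1) → ℝ → ℝ → ℝ} {u₀ : ℝ → ℝ}
  {v0 : Fin (m + 1) → ℝ} {v : ℝ → Fin (m + 1) → ℝ}

lemma eNorm_stabilityCoeff :
    eNorm (stabilityCoeff m ω σ k l lJ) =
      Real.sqrt ((l 0 * Real.sqrt (2 * m) / (k 0 - σ) +
        lJ * Real.exp ((k 0 - σ) * ω) / (1 - Real.exp (-((k 0 - σ) * ω)))) ^ 2 +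
        ∑ i : Fin m, (2 * l i.succ / (k i.succ - σ)) ^ 2) := by
  simp [eNorm, stabilityCoeff, Fin.sum_univ_succ, Fin.succ_ne_zero]

lemma abs_PiOp_zero_le (hω : 0 < ω)
    (hθ : ∀ i : ℤ, (i : ℝ) * ω ≤ θ i ∧ θ i < ((i : ℝ) + 1) * ω) (hσk : σ < k 0)
    (hl : 0 ≤ l 0) (hlJ : 0 ≤ lJ) (hS : 0 ≤ S) (hτ : 0 ≤ τ) (hw₀0 : w₀ 0 = 0) (hu₀0 : u₀ 0 = 0)
    (hw₀lip : ∀ x x' : Fin (m + 1) → ℝ,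
      |w₀ x - w₀ x'| ≤ l 0 * Real.sqrt (2 * m) * eNorm (fun j => x j - x' j))
    (hu₀lip : ∀ z z' : ℝ, |u₀ z - u₀ z'| ≤ lJ * |z - z'|)
    (hv : ∀ s ∈ Set.Icc 0 τ, eNorm (v s) ≤ S * exp (-σ * s)) :
    |PiOp m θ k w₀ w u₀ v0 v τ 0| ≤
      (|v0 0| + S * stabilityCoeff m ω σ k l lJ 0) * exp (-σ * τ) := by
  have hw : ∀ s ∈ Set.Icc 0 τ, |w₀ (v s)| ≤ l 0 * Real.sqrt (2 * m) * S * exp (-σ * s) :=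
    fun s hs => calc
      |w₀ (v s)| ≤ l 0 * Real.sqrt (2 * m) * eNorm (v s) := by simpa [hw₀0] using hw₀lip (v s) 0
      _ ≤ _ := by rw [mul_assoc _ S]; gcongr; exact hv s hs
  have hu : ∀ i, 0 ≤ θ i → θ i < τ → |u₀ (v (θ i) 0)| ≤ lJ * S * exp (-σ * θ i) :=
    fun i h0 hi => calc
      |u₀ (v (θ i) 0)| ≤ lJ * |v (θ i) 0| := by simpa [hu₀0] using hu₀lip (v (θ i) 0) 0
      _ ≤ _ := by
        rw [mul_assoc _ S]
        gcongr
        exact (abs_le_eNorm _ _).trans (hv _ ⟨h0, hi.le⟩)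
  simp only [PiOp, ↓reduceIte]
  calc _ ≤ _ := norm_add₃_le (E := ℝ)
    _ ≤ |v0 0| * exp (-σ * τ) + l 0 * Real.sqrt (2 * m) * S / (k 0 - σ) * exp (-σ * τ) +
        lJ * S * (exp ((k 0 - σ) * ω) / (1 - exp (-((k 0 - σ) * ω)))) * exp (-σ * τ) := by
      gcongr ?_ + ?_ + ?_
      · exact abs_exp_neg_mul_mul_le hσk.le hτ _
      · exact abs_integral_exp_kernel_le hσk hτ (by positivity) hw
      · exact abs_tsum_impulses_le hω hθ hσk (by positivity) hu
    _ = _ := by rw [stabilityCoeff, if_pos rfl]; ring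

lemma abs_PiOp_succ_le {j : Fin (m + 1)} (hj : j ≠ 0) (hσk : σ < k j) (hl : 0 ≤ l j)
    (hS : 0 ≤ S) (hτ : 0 ≤ τ) (hw0 : w j 0 0 = 0)
    (hwlip : ∀ a a' b b' : ℝ, |w j a b - w j a' b'| ≤ l j * (|a - a'| + |b - b'|))
    (hv : ∀ s ∈ Set.Icc 0 τ, eNorm (v s) ≤ S * exp (-σ * s)) :
    |PiOp m θ k w₀ w u₀ v0 v τ j| ≤
      (|v0 j| + S * stabilityCoeff m ω σ k l lJ j) * exp (-σ * τ) := by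
  have hw : ∀ s ∈ Set.Icc 0 τ, |w j (v s 0) (v s j)| ≤ 2 * l j * S * exp (-σ * s) :=
    fun s hs => calc
      |w j (v s 0) (v s j)| ≤ l j * (|v s 0| + |v s j|) := by
        simpa [hw0] using hwlip (v s 0) 0 (v s j) 0
      _ ≤ l j * (S * exp (-σ * s) + S * exp (-σ * s)) := by
        gcongr <;> exact (abs_le_eNorm _ _).trans (hv s hs)
      _ = _ := by ring
  simp only [PiOp, if_neg hj]
  calc _ ≤ _ := abs_add_le _ _
    _ ≤ |v0 j| * exp (-σ * τ) + 2 * l j * S / (k j - σ) * exp (-σ * τ) := by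
      gcongr
      · exact abs_exp_neg_mul_mul_le hσk.le hτ _
      · exact abs_integral_exp_kernel_le hσk hτ (by positivity) hw
    _ = _ := by rw [stabilityCoeff, if_neg hj]; ring

lemma eNorm_PiOp_le (hω : 0 < ω)
    (hθ : ∀ i : ℤ, (i : ℝ) * ω ≤ θ i ∧ θ i < ((i : ℝ) + 1) * ω)
    (hl : ∀ j, 0 ≤ l j) (hlJ : 0 ≤ lJ) (hσk : ∀ j, σ < k j)
    (hw₀0 : w₀ 0 = 0) (hw0 : ∀ j, j ≠ 0 → w j 0 0 = 0) (hu₀0 : u₀ 0 = 0)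
    (hw₀lip : ∀ x x' : Fin (m + 1) → ℝ,
      |w₀ x - w₀ x'| ≤ l 0 * Real.sqrt (2 * m) * eNorm (fun j => x j - x' j))
    (hwlip : ∀ j, j ≠ 0 → ∀ a a' b b' : ℝ,
      |w j a b - w j a' b'| ≤ l j * (|a - a'| + |b - b'|))
    (hu₀lip : ∀ z z' : ℝ, |u₀ z - u₀ z'| ≤ lJ * |z - z'|)
    (hS : 0 ≤ S) (hτ : 0 ≤ τ) (hv : ∀ s ∈ Set.Icc 0 τ, eNorm (v s) ≤ S * exp (-σ * s)) :
    eNorm (PiOp m θ k w₀ w u₀ v0 v τ) ≤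
      (eNorm v0 + S * eNorm (stabilityCoeff m ω σ k l lJ)) * exp (-σ * τ) := by
  refine eNorm_le_of_abs_le (exp_pos _).le hS fun j => ?_
  by_cases hj : j = 0
  · subst hj
    exact abs_PiOp_zero_le hω hθ (hσk 0) (hl 0) hlJ hS hτ hw₀0 hu₀0 hw₀lip hu₀lip hv
  · exact abs_PiOp_succ_le hj (hσk j) (hl j) hS hτ (hw0 j hj) (hwlip j hj) hv

end FixedPointOperator

theorem stmt14
    (m : ℕ) (ω : ℝ) (hω : 0 < ω) (θ : ℤ → ℝ)
    (hθ : ∀ i : ℤ, (i : ℝ) * ω ≤ θ i ∧ θ i < ((i : ℝ) + 1) * ω)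
    (k : Fin (m + 1) → ℝ)
    (l : Fin (m + 1) → ℝ) (lJ : ℝ) (hl : ∀ j, 0 ≤ l j) (hlJ : 0 ≤ lJ)
    (w₀ : (Fin (m + 1) → ℝ) → ℝ) (w : Fin (m + 1) → ℝ → ℝ → ℝ) (u₀ : ℝ → ℝ)
    (σ : ℝ) (hσk : ∀ j, σ < k j)
    (hw₀0 : w₀ 0 = 0) (hw0 : ∀ j, j ≠ 0 → w j 0 0 = 0) (hu₀0 : u₀ 0 = 0)
    (hw₀lip : ∀ v v' : Fin (m + 1) → ℝ,
      |w₀ v - w₀ v'| ≤ l 0 * Real.sqrt (2 * m) * eNorm (fun j => v j - v' j))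
    (hwlip : ∀ j, j ≠ 0 → ∀ a a' b b' : ℝ,
      |w j a b - w j a' b'| ≤ l j * (|a - a'| + |b - b'|))
    (hu₀lip : ∀ z z' : ℝ, |u₀ z - u₀ z'| ≤ lJ * |z - z'|)
    (hΛσ : Real.sqrt ((l 0 * Real.sqrt (2 * m) / (k 0 - σ) + lJ * Real.exp ((k 0 - σ) * ω) / (1 - Real.exp (-((k 0 - σ) * ω)))) ^ 2 +
      ∑ i : Fin m, (2 * l i.succ / (k i.succ - σ)) ^ 2) < 1) :
    ∀ ε : ℝ, 0 < ε → ∃ δ : ℝ, 0 < δ ∧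
      ∀ v : ℝ → Fin (m + 1) → ℝ, Measurable v → (∃ B, ∀ t, eNorm (v t) ≤ B) →
        (∀ t : ℝ, 0 ≤ t → v t = PiOp m θ k w₀ w u₀ (v 0) v t) →
        eNorm (v 0) < δ →
        ∀ t : ℝ, 0 ≤ t → eNorm (v t) ≤ ε * Real.exp (-σ * t) := by
  intro ε hε
  have hΛ : eNorm (stabilityCoeff m ω σ k l lJ) < 1 := by rwa [eNorm_stabilityCoeff]
  set Λ := eNorm (stabilityCoeff m ω σ k l lJ)
  refine ⟨ε * (1 - Λ), mul_pos hε (sub_pos.2 hΛ), ?_⟩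
  rintro v - ⟨B, hB⟩ hfix hv0 t ht
  have hdecay : ∀ τ ∈ Set.Icc 0 t, exp (σ * τ) * eNorm (v τ) ≤ eNorm (v 0) / (1 - Λ) := by
    refine fun τ hτ => le_div_one_sub_of_self_improving_bound
      (g := fun s => exp (σ * s) * eNorm (v s)) (s := Set.Icc 0 t) hΛ ⟨0, le_rfl, ht⟩ ?_ ?_ hτ
    · refine ⟨exp (|σ| * t) * B, Set.forall_mem_image.2 fun s hs => ?_⟩
      have hσs : σ * s ≤ |σ| * t := by nlinarith [le_abs_self σ, abs_nonneg σ, hs.1, hs.2]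
      exact mul_le_mul (exp_le_exp.2 hσs) (hB s) (sqrt_nonneg _) (exp_pos _).le
    · intro S hS τ hτ
      have hS0 : 0 ≤ S := (mul_nonneg (exp_pos _).le (sqrt_nonneg _)).trans (hS 0 ⟨le_rfl, ht⟩)
      have hvS : ∀ s ∈ Set.Icc 0 τ, eNorm (v s) ≤ S * exp (-σ * s) :=
        fun s hs => le_mul_exp_neg_mul_iff.2 (hS s ⟨hs.1, hs.2.trans hτ.2⟩)
      rw [← le_mul_exp_neg_mul_iff, hfix τ hτ.1]
      calc _ ≤ (eNorm (v 0) + S * Λ) * exp (-σ * τ) :=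
            eNorm_PiOp_le hω hθ hl hlJ hσk hw₀0 hw0 hu₀0 hw₀lip hwlip hu₀lip hS0 hτ.1 hvS
        _ = _ := by ring
  rw [le_mul_exp_neg_mul_iff]
  calc exp (σ * t) * eNorm (v t) ≤ eNorm (v 0) / (1 - Λ) := hdecay t ⟨ht, le_rfl⟩
    _ ≤ ε := by rw [div_le_iff₀ (sub_pos.2 hΛ)]; exact hv0.le
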